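/- Let G be a weighted graph with maximum degree at most 3 and nonnegative edge weights, let T be a spanning tree of G, and suppose every odd cycle in T + e (for any non-tree edge e) has length at least r. Then for every p with 0 ≤ p ≤ 1, mac(G) ≥ ((p+1)/2)·w(T) + ((1 − p^{r−1})/2)·(w(G) − w(T)). -/

import Mathlib

/-!
Colour the vertices at random so that the edges of `T` are cut independently, each with
probability `(1 + p) / 2`; this is a legitimate law because a colouring of a tree is the same as
the colour of one vertex together with the set of cut tree edges. A tree edge is then cut with
probability `(1 + p) / 2`. A non-tree edge `xy` is cut iff an odd number of edges of the tree path
from `x` to `y` is cut, which happens with probability `(1 - (-p) ^ ℓ) / 2`, `ℓ` the length of the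
path. This is at least `(1 - p ^ (r - 1)) / 2`: trivially for odd `ℓ`, and for even `ℓ` because
the path closes with `xy` to an odd cycle of `T + xy`, so `ℓ + 1 ≥ r`. Some colouring does at
least as well as the expected cut weight.
-/

namespace MaxCut

/-- Weight of the cut induced by vertex set `A`: total weight of edges of `G`
with exactly one endpoint in `A`. -/
noncomputable def cutWeight {V : Type*} (G : SimpleGraph V) (w : Sym2 V → ℝ) (A : Set V) : ℝ :=
  ∑ᶠ e ∈ {e ∈ G.edgeSet | ∃ x y, e = s(x, y) ∧ x ∈ A ∧ y ∉ A}, w e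

/-- Total weight of the edges of `G`. -/
noncomputable def totalWeight {V : Type*} (G : SimpleGraph V) (w : Sym2 V → ℝ) : ℝ :=
  ∑ᶠ e ∈ G.edgeSet, w e

/-- Total weight of a set of edges. -/
noncomputable def setWeight {V : Type*} (w : Sym2 V → ℝ) (M : Set (Sym2 V)) : ℝ :=
  ∑ᶠ e ∈ M, w e

/-- `T` is a spanning tree of `G`. -/
def IsSpanningTree {V : Type*} (G T : SimpleGraph V) : Prop := T ≤ G ∧ T.IsTree

/-- `T` is a DFS tree of `G` rooted at `r`: a spanning tree such that every edge of `G`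
joins an ancestor–descendant pair (here `x` is an ancestor of `y` in the tree `T` rooted
at `r` iff `x` lies on the unique `r`–`y` path, equivalently
`T.dist r x + T.dist x y = T.dist r y`). -/
def IsDFSTree {V : Type*} (G T : SimpleGraph V) (r : V) : Prop :=
  T ≤ G ∧ T.IsTree ∧ ∀ x y, G.Adj x y →
    T.dist r x + T.dist x y = T.dist r y ∨ T.dist r y + T.dist y x = T.dist r x

/-- `M` is a matching of `G` (a set of pairwise non-adjacent edges of `G`). -/
def IsMatching {V : Type*} (G : SimpleGraph V) (M : Set (Sym2 V)) : Prop :=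
  M ⊆ G.edgeSet ∧ ∀ e ∈ M, ∀ f ∈ M, e ≠ f → ∀ v, ¬(v ∈ e ∧ v ∈ f)

/-- Every vertex of `G` has degree at most `d`. -/
def MaxDegreeLE {V : Type*} (G : SimpleGraph V) (d : ℕ) : Prop :=
  ∀ v : V, {u | G.Adj v u}.ncard ≤ d



open SimpleGraph Finset

section

variable {V : Type*}

def crosses (f : V → Bool) : Sym2 V → Bool :=
  Sym2.lift ⟨fun x y => xor (f x) (f y), fun _ _ => Bool.xor_comm _ _⟩

@[simp] lemma crosses_mk (f : V → Bool) (x y : V) : crosses f s(x, y) = xor (f x) (f y) := rfl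

def boolSign (b : Bool) : ℝ := if b then -1 else 1

lemma boolSign_xor (a b : Bool) : boolSign (xor a b) = boolSign a * boolSign b := by
  cases a <;> cases b <;> norm_num [boolSign]

lemma ite_one_zero_eq_boolSign (b : Bool) : (if b then (1 : ℝ) else 0) = (1 - boolSign b) / 2 := by
  cases b <;> norm_num [boolSign]

lemma boolSign_xor_eq_prod_edges {G : SimpleGraph V} (f : V → Bool) {x y : V} (W : G.Walk x y) :
    boolSign (xor (f x) (f y)) = (W.edges.map fun e => boolSign (crosses f e)).prod := by
  induction W with
  | nil => simp [boolSign]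
  | @cons a c b _ W ih =>
    rw [Walk.edges_cons, List.map_cons, List.prod_cons, ← ih, crosses_mk, ← boolSign_xor]
    cases f a <;> cases f c <;> cases f b <;> rfl

lemma eq_of_crosses_eq {G : SimpleGraph V} (hG : G.Preconnected) {f g : V → Bool} {a : V}
    (ha : f a = g a) (h : ∀ x y, G.Adj x y → crosses f s(x, y) = crosses g s(x, y)) : f = g := by
  funext v
  obtain ⟨W⟩ := hG a v
  induction W with
  | nil => exact ha
  | @cons x y z hxy W ih =>
    have hxy' := h _ _ hxy
    simp only [crosses_mk, ha] at hxy'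
    exact ih (by cases g x <;> simpa using hxy')

lemma exists_isCycle_sup_fromEdgeSet {T : SimpleGraph V} {x y : V} (hxy : x ≠ y)
    (hxyT : s(x, y) ∉ T.edgeSet) (P : T.Path x y) :
    ∃ c : (T ⊔ fromEdgeSet {s(x, y)}).Walk y y,
      c.IsCycle ∧ c.length = (P : T.Walk x y).length + 1 := by
  have hadj : (T ⊔ fromEdgeSet {s(x, y)}).Adj y x :=
    Or.inr ⟨Sym2.eq_swap, hxy.symm⟩
  let P' : (T ⊔ fromEdgeSet {s(x, y)}).Path x y := ⟨_, P.2.mapLe le_sup_left⟩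
  refine ⟨_, Path.cons_isCycle P' hadj ?_, by simp [P']⟩
  simpa [P', Walk.edges_mapLe_eq_edges, Sym2.eq_swap] using
    fun h => hxyT (Walk.edges_subset_edgeSet _ h)

lemma one_sub_pow_le_one_sub_neg_pow {p : ℝ} (hp₀ : 0 ≤ p) (hp₁ : p ≤ 1) {r ℓ : ℕ}
    (h : Even ℓ → r ≤ ℓ + 1) : 1 - p ^ (r - 1) ≤ 1 - (-p) ^ ℓ := by
  rcases Nat.even_or_odd ℓ with hℓ | hℓ
  · rw [hℓ.neg_pow]
    linarith [pow_le_pow_of_le_one hp₀ hp₁ (show r - 1 ≤ ℓ by have := h hℓ; omega)]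
  · rw [hℓ.neg_pow]
    linarith [pow_nonneg hp₀ ℓ, pow_nonneg hp₀ (r - 1)]

section Tree

variable {T : SimpleGraph V} [Fintype T.edgeSet]

def bernoulliMass (q : ℝ) (b : Bool) : ℝ := if b then q else 1 - q

/-- Twice the law of a random colouring in which the tree edges are cut independently, each
with probability `q`: the colour of any one vertex is a free fair coin. -/
noncomputable def treeLaw (T : SimpleGraph V) [Fintype T.edgeSet] (q : ℝ) (f : V → Bool) : ℝ :=
  ∏ e ∈ T.edgeFinset, bernoulliMass q (crosses f e)

lemma treeLaw_nonneg {q : ℝ} (hq₀ : 0 ≤ q) (hq₁ : q ≤ 1) (f : V → Bool) : 0 ≤ treeLaw T q f :=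
  prod_nonneg fun e _ => by unfold bernoulliMass; split_ifs <;> linarith

variable [Fintype V] [DecidableEq V]

lemma bijective_apply_crosses (hT : T.IsTree) (v₀ : V) :
    Function.Bijective fun f : V → Bool => (f v₀, fun e : T.edgeFinset => crosses f e) := by
  rw [Fintype.bijective_iff_injective_and_card]
  refine ⟨fun f g hfg => eq_of_crosses_eq hT.connected.preconnected (congrArg Prod.fst hfg)
    fun x y hxy => congrFun (congrArg Prod.snd hfg) ⟨s(x, y), mem_edgeFinset.2 hxy⟩, ?_⟩
  rw [Fintype.card_fun, Fintype.card_prod, Fintype.card_fun, Fintype.card_bool,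
    Fintype.card_coe, ← hT.card_edgeFinset, pow_succ, mul_comm]

lemma sum_prod_crosses (hT : T.IsTree) (g : Sym2 V → Bool → ℝ) :
    ∑ f : V → Bool, ∏ e ∈ T.edgeFinset, g e (crosses f e)
      = 2 * ∏ e ∈ T.edgeFinset, (g e false + g e true) := by
  obtain ⟨v₀⟩ := hT.connected.nonempty
  rw [Fintype.sum_bijective _ (bijective_apply_crosses hT v₀) _
    (fun c => ∏ e : T.edgeFinset, g e (c.2 e)) fun f => (prod_coe_sort _ _).symm,
    Fintype.sum_prod_type, Fintype.sum_bool, ← two_mul, ← Fintype.prod_sum,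
    ← prod_coe_sort T.edgeFinset]
  simp only [Fintype.sum_bool, add_comm]

lemma sum_treeLaw_mul_prod_boolSign (hT : T.IsTree) (q : ℝ) {S : Finset (Sym2 V)}
    (hS : S ⊆ T.edgeFinset) :
    ∑ f : V → Bool, treeLaw T q f * ∏ e ∈ S, boolSign (crosses f e) = 2 * (1 - 2 * q) ^ #S := by
  have hTS : T.edgeFinset ∩ S = S := inter_eq_right.2 hS
  calc _ = ∑ f : V → Bool, ∏ e ∈ T.edgeFinset,
          bernoulliMass q (crosses f e) * if e ∈ S then boolSign (crosses f e) else 1 := by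
        simp only [treeLaw, prod_mul_distrib, prod_ite_mem, hTS]
    _ = 2 * ∏ e ∈ T.edgeFinset, if e ∈ S then 1 - 2 * q else 1 := by
        rw [sum_prod_crosses hT fun e b => bernoulliMass q b * if e ∈ S then boolSign b else 1]
        congr 1
        refine prod_congr rfl fun e _ => ?_
        split_ifs <;> norm_num [bernoulliMass, boolSign]; ring
    _ = _ := by rw [prod_ite_mem, hTS, prod_const]

lemma sum_treeLaw (hT : T.IsTree) (q : ℝ) : ∑ f, treeLaw T q f = 2 := by
  simpa using sum_treeLaw_mul_prod_boolSign hT q (empty_subset _)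

lemma sum_treeLaw_mul_crosses (hT : T.IsTree) (q : ℝ) {x y : V} (P : T.Path x y) :
    ∑ f : V → Bool, treeLaw T q f * (if crosses f s(x, y) then 1 else 0)
      = 1 - (1 - 2 * q) ^ (P : T.Walk x y).length := by
  set S := (P : T.Walk x y).edges.toFinset
  have hS : S ⊆ T.edgeFinset := fun e he =>
    mem_edgeFinset.2 (Walk.edges_subset_edgeSet _ (List.mem_toFinset.1 he))
  have hcard : #S = (P : T.Walk x y).length := by
    rw [List.toFinset_card_of_nodup P.2.edges_nodup, Walk.length_edges]
  have hsign : ∀ f, boolSign (crosses f s(x, y)) = ∏ e ∈ S, boolSign (crosses f e) := fun f => by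
    rw [crosses_mk, boolSign_xor_eq_prod_edges f (P : T.Walk x y),
      List.prod_toFinset _ P.2.edges_nodup]
  simp only [ite_one_zero_eq_boolSign, hsign, mul_div_assoc', mul_sub, mul_one, ← sum_div,
    sum_sub_distrib, sum_treeLaw hT, sum_treeLaw_mul_prod_boolSign hT q hS, hcard]
  ring

lemma sum_treeLaw_mul_crosses_of_adj (hT : T.IsTree) (q : ℝ) {x y : V} (h : T.Adj x y) :
    ∑ f : V → Bool, treeLaw T q f * (if crosses f s(x, y) then 1 else 0) = 2 * q := by
  rw [sum_treeLaw_mul_crosses hT q (Path.singleton h)]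
  simp

lemma one_sub_pow_le_sum_treeLaw_mul_crosses (hT : T.IsTree) {p : ℝ} (hp₀ : 0 ≤ p)
    (hp₁ : p ≤ 1) {r : ℕ} {x y : V} (hxy : x ≠ y) (hxyT : s(x, y) ∉ T.edgeSet)
    (hcyc : ∀ (v : V) (c : (T ⊔ fromEdgeSet {s(x, y)}).Walk v v),
      c.IsCycle → Odd c.length → r ≤ c.length) :
    1 - p ^ (r - 1)
      ≤ ∑ f : V → Bool, treeLaw T ((1 + p) / 2) f * if crosses f s(x, y) then 1 else 0 := by
  let P : T.Path x y := (hT.connected.preconnected x y).some.toPath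
  rw [sum_treeLaw_mul_crosses hT _ P, show 1 - 2 * ((1 + p) / 2) = -p by ring]
  refine one_sub_pow_le_one_sub_neg_pow hp₀ hp₁ fun hev => ?_
  obtain ⟨c, hc, hlen⟩ := exists_isCycle_sup_fromEdgeSet hxy hxyT P
  exact hlen ▸ hcyc y c hc (hlen ▸ hev.add_one)

lemma ite_le_sum_treeLaw_mul_crosses {G : SimpleGraph V} (hT : T.IsTree) {p : ℝ} (hp₀ : 0 ≤ p)
    (hp₁ : p ≤ 1) {r : ℕ} (hcyc : ∀ e ∈ G.edgeSet, e ∉ T.edgeSet →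
      ∀ (v : V) (c : (T ⊔ fromEdgeSet {e}).Walk v v), c.IsCycle → Odd c.length → r ≤ c.length)
    {e : Sym2 V} (he : e ∈ G.edgeSet) :
    (if e ∈ T.edgeFinset then 1 + p else 1 - p ^ (r - 1))
      ≤ ∑ f : V → Bool, treeLaw T ((1 + p) / 2) f * if crosses f e then 1 else 0 := by
  induction e using Sym2.ind with | _ x y => ?_
  split_ifs with heT
  · rw [sum_treeLaw_mul_crosses_of_adj hT _ (mem_edgeFinset.1 heT)]
    linarith
  · have heT' : s(x, y) ∉ T.edgeSet := by simpa using heT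
    exact one_sub_pow_le_sum_treeLaw_mul_crosses hT hp₀ hp₁ (G.ne_of_adj he) heT'
      (hcyc _ he heT')

end Tree

lemma exists_le_of_mul_sum_le_sum_mul {ι : Type*} [Fintype ι] {μ c : ι → ℝ} {B : ℝ}
    (hμ : ∀ i, 0 ≤ μ i) (hμpos : 0 < ∑ i, μ i) (h : B * ∑ i, μ i ≤ ∑ i, μ i * c i) :
    ∃ i, B ≤ c i := by
  contrapose! h
  obtain ⟨i, -, hi⟩ := exists_lt_of_sum_lt (s := univ) (f := fun _ => (0 : ℝ)) (g := μ)
    (by simpa using hμpos)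
  calc ∑ i, μ i * c i < ∑ i, μ i * B :=
        sum_lt_sum (fun j _ => mul_le_mul_of_nonneg_left (h j).le (hμ j))
          ⟨i, mem_univ _, mul_lt_mul_of_pos_left (h i) hi⟩
    _ = B * ∑ i, μ i := by rw [← sum_mul, mul_comm]

lemma sum_mul_ite_mem_of_subset {α : Type*} [DecidableEq α] {s t : Finset α} (h : s ⊆ t)
    (w : α → ℝ) (a b : ℝ) :
    ∑ e ∈ t, w e * (if e ∈ s then a else b)
      = a * ∑ e ∈ s, w e + b * (∑ e ∈ t, w e - ∑ e ∈ s, w e) := by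
  rw [← sum_sdiff_eq_sub h, ← sum_sdiff h, mul_sum, mul_sum, add_comm]
  congr 1 <;> refine sum_congr rfl fun e he => ?_
  · rw [if_pos he, mul_comm]
  · rw [if_neg (mem_sdiff.1 he).2, mul_comm]

lemma totalWeight_eq_sum (G : SimpleGraph V) [Fintype G.edgeSet] (w : Sym2 V → ℝ) :
    totalWeight G w = ∑ e ∈ G.edgeFinset, w e := by
  rw [totalWeight, ← coe_edgeFinset, finsum_mem_coe_finset]

lemma cutWeight_setOf_eq_sum (G : SimpleGraph V) [Fintype G.edgeSet] (w : Sym2 V → ℝ)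
    (f : V → Bool) :
    cutWeight G w {v | f v = true} = ∑ e ∈ G.edgeFinset, w e * if crosses f e then 1 else 0 := by
  have hcut : {e ∈ G.edgeSet | ∃ x y, e = s(x, y) ∧ x ∈ {v | f v = true} ∧ y ∉ {v | f v = true}}
      = ↑(G.edgeFinset.filter fun e => crosses f e) := by
    ext e
    induction e using Sym2.ind with
    | _ a b =>
      simp only [Set.mem_ofPred_eq, coe_filter, mem_edgeFinset, crosses_mk]
      refine and_congr_right fun _ => ⟨?_, fun h => ?_⟩
      · rintro ⟨x, y, hxy, hx, hy⟩
        rcases Sym2.eq_iff.1 hxy with ⟨rfl, rfl⟩ | ⟨rfl, rfl⟩ <;> simp_all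
      · cases ha : f a <;> cases hb : f b <;> simp_all
        exacts [⟨b, a, Or.inr ⟨rfl, rfl⟩, hb, ha⟩, ⟨a, b, Or.inl ⟨rfl, rfl⟩, ha, hb⟩]
  rw [cutWeight, hcut, finsum_mem_coe_finset, sum_filter]
  exact sum_congr rfl fun e _ => by split_ifs <;> simp

lemma sum_mul_cutWeight_setOf [Fintype V] [DecidableEq V] (G : SimpleGraph V)
    [Fintype G.edgeSet] (w : Sym2 V → ℝ) (μ : (V → Bool) → ℝ) :
    ∑ f, μ f * cutWeight G w {v | f v = true}
      = ∑ e ∈ G.edgeFinset, w e * ∑ f, μ f * if crosses f e then 1 else 0 := by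
  simp only [cutWeight_setOf_eq_sum, mul_sum]
  rw [sum_comm]
  exact sum_congr rfl fun _ _ => sum_congr rfl fun _ _ => by ring

end

theorem maxcut_ge_prob_bound_general {V : Type*} [Fintype V] (r : ℕ)
    (G T : SimpleGraph V) (w : Sym2 V → ℝ) (hw : ∀ e, 0 ≤ w e)
    (hT : IsSpanningTree G T)
    (hcyc : ∀ e ∈ G.edgeSet, e ∉ T.edgeSet →
      ∀ (v : V) (q : (T ⊔ SimpleGraph.fromEdgeSet {e}).Walk v v),
        q.IsCycle → Odd q.length → r ≤ q.length)
    (p : ℝ) (hp0 : 0 ≤ p) (hp1 : p ≤ 1) :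
    ∃ A : Set V,
      (p + 1) / 2 * totalWeight T w
        + (1 - p ^ (r - 1)) / 2 * (totalWeight G w - totalWeight T w)
        ≤ cutWeight G w A := by
  classical
  obtain ⟨hTG, hT⟩ := hT
  set μ := treeLaw T ((1 + p) / 2)
  have hμsum : ∑ f, μ f = 2 := sum_treeLaw hT _
  suffices ∃ f : V → Bool, (p + 1) / 2 * totalWeight T w
      + (1 - p ^ (r - 1)) / 2 * (totalWeight G w - totalWeight T w)
        ≤ cutWeight G w {v | f v = true} from this.elim fun _ hf => ⟨_, hf⟩
  refine exists_le_of_mul_sum_le_sum_mul (μ := μ)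
    (treeLaw_nonneg (by linarith) (by linarith)) (by rw [hμsum]; norm_num) ?_
  calc _ = ∑ e ∈ G.edgeFinset, w e * (if e ∈ T.edgeFinset then 1 + p else 1 - p ^ (r - 1)) := by
        rw [hμsum, sum_mul_ite_mem_of_subset (edgeFinset_mono hTG), totalWeight_eq_sum,
          totalWeight_eq_sum]
        ring
    _ ≤ ∑ e ∈ G.edgeFinset, w e * ∑ f, μ f * if crosses f e then 1 else 0 :=
        sum_le_sum fun e he => mul_le_mul_of_nonneg_left
          (ite_le_sum_treeLaw_mul_crosses hT hp0 hp1 hcyc (mem_edgeFinset.1 he)) (hw e)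
    _ = _ := (sum_mul_cutWeight_setOf G w μ).symm

/-- Let `G` have maximum degree at most 3, `T` a spanning tree of `G`, and
suppose every odd cycle of `T + e` (for a non-tree edge `e`) has length at least `r`. Then
for every `0 ≤ p ≤ 1`, `mac(G) ≥ ((p+1)/2)·w(T) + ((1 − p^(r−1))/2)·(w(G) − w(T))`. -/
theorem maxcut_ge_prob_bound {V : Type*} [Fintype V] (r : ℕ)
    (G T : SimpleGraph V) (w : Sym2 V → ℝ) (hw : ∀ e, 0 ≤ w e)
    (hdeg : MaxDegreeLE G 3) (hT : IsSpanningTree G T)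
    (hcyc : ∀ e ∈ G.edgeSet, e ∉ T.edgeSet →
      ∀ (v : V) (q : (T ⊔ SimpleGraph.fromEdgeSet {e}).Walk v v),
        q.IsCycle → Odd q.length → r ≤ q.length)
    (p : ℝ) (hp0 : 0 ≤ p) (hp1 : p ≤ 1) :
    ∃ A : Set V,
      (p + 1) / 2 * totalWeight T w
        + (1 - p ^ (r - 1)) / 2 * (totalWeight G w - totalWeight T w)
        ≤ cutWeight G w A :=
  maxcut_ge_prob_bound_general r G T w hw hT hcyc p hp0 hp1

end MaxCut
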